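/- With m = n−1, the complex dimension of ker(φ) equals the n-th Catalan number C_n = (1/(n+1))·binom(2n,n). (Equivalently, the representation ρ_{n,3} of S_{2n−1} on the multilinear component of the free LAnKe on 2n−1 generators has dimension given by the Catalan number C_n.) -/

import Mathlib

open Finset

/-- Number of inversions of a list. -/
def invCount {α : Type*} [LinearOrder α] (l : List α) : ℕ :=
  (Finset.univ.filter
    (fun p : Fin l.length × Fin l.length => p.1 < p.2 ∧ l.get p.2 < l.get p.1)).card

/-- The sign `(-1)^(number of inversions)` of the permutation sorting a list
with pairwise distinct entries into increasing order. -/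
noncomputable def invSign {α : Type*} [LinearOrder α] (l : List α) : ℂ :=
  (-1) ^ invCount l

/-- Replace the entry `a` by `b` (in place) in a list. -/
def replaceOne {α : Type*} [DecidableEq α] (l : List α) (a b : α) : List α :=
  l.map fun z => if z = a then b else z

open scoped Classical in
/-- Dirac delta: the basis vector corresponding to an index `r`. -/
noncomputable def delta {β : Type*} (r : β) : β → ℂ := fun r' => if r' = r then 1 else 0

/-- Index for the basis of ordered column tabloids of shape `(2^m, 1^{n-m})` on
`{1, …, n+m}` (identified with `Fin (n+m)`): such a tabloid is recorded by the
set `T` of entries of its first column (the second column is the complement). -/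
abbrev Col (n m : ℕ) := {T : Finset (Fin (n + m)) // T.card = n}

/-- The space `M̃` of column tabloids of shape `(2^m, 1^{n-m})`. -/
abbrev Mt (n m : ℕ) := Col n m → ℂ

lemma card_compl' {n m : ℕ} (T : Col n m) : (T.1ᶜ).card = m := by
  rw [Finset.card_compl, T.2, Fintype.card_fin]
  omega

/-- `yel T j` is the `(j+1)`-st smallest element of the complement of `T`
(i.e. of the second column). -/
noncomputable def yel {n m : ℕ} (T : Col n m) (j : Fin m) : Fin (n + m) :=
  (T.1ᶜ).orderEmbOfFin (card_compl' T) j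

lemma yel_not_mem {n m : ℕ} (T : Col n m) (j : Fin m) : yel T j ∉ T.1 :=
  Finset.mem_compl.mp (Finset.orderEmbOfFin_mem (T.1ᶜ) (card_compl' T) j)

/-- The first column obtained from `T` after exchanging `x ∈ T` with the
`(j+1)`-st smallest element of the complement. -/
noncomputable def swapSet {n m : ℕ} (T : Col n m) (x : Fin (n + m)) (j : Fin m) :
    Finset (Fin (n + m)) :=
  insert (yel T j) (T.1.erase x)

lemma swapSet_card {n m : ℕ} (T : Col n m) {x : Fin (n + m)} (hx : x ∈ T.1) (j : Fin m) :
    (swapSet T x j).card = n := by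
  have h0 : 0 < n := T.2 ▸ Finset.card_pos.mpr ⟨x, hx⟩
  rw [swapSet, Finset.card_insert_of_notMem
      (fun h => yel_not_mem T j (Finset.mem_of_mem_erase h)),
    Finset.card_erase_of_mem hx, T.2]
  omega

/-- `swap_{x,j}(T)`: the signed basis vector obtained from `T` by exchanging
`x` (in the first column) with the `(j+1)`-st entry of the second column in
place, the sign `ε` being the product of the signs of the two permutations
re-sorting the two columns. -/
noncomputable def swapTerm {n m : ℕ} (T : Col n m) (x : {a // a ∈ T.1}) (j : Fin m) :
    Mt n m :=
  (invSign (replaceOne (T.1.sort (· ≤ ·)) x.1 (yel T j)) *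
      invSign (replaceOne ((T.1ᶜ).sort (· ≤ ·)) (yel T j) x.1)) •
    delta (⟨swapSet T x.1 j, swapSet_card T x.2 j⟩ : Col n m)

/-- The operator `η` on the basis vector `v_T`. -/
noncomputable def etaBasis {n m : ℕ} (T : Col n m) : Mt n m :=
  (m : ℂ) • delta T - ∑ j : Fin m, ∑ x ∈ T.1.attach, swapTerm T x j

/-- The operator `η : M̃ → M̃`, extended linearly from the basis. -/
noncomputable def etaFun {n m : ℕ} (f : Mt n m) : Mt n m :=
  ∑ T : Col n m, f T • etaBasis T

/-- `η` as a linear map. -/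
noncomputable def etaLin (n m : ℕ) : Mt n m →ₗ[ℂ] Mt n m where
  toFun := etaFun
  map_add' f g := by
    simp [etaFun, add_smul, Finset.sum_add_distrib]
  map_smul' c f := by
    simp [etaFun, Finset.smul_sum, smul_smul]

/-- The sign picked up when re-sorting the two columns after relabelling by `σ`. -/
noncomputable def actSign {n m : ℕ} (σ : Equiv.Perm (Fin (n + m))) (T : Col n m) : ℂ :=
  invSign ((T.1.sort (· ≤ ·)).map ⇑σ) * invSign (((T.1ᶜ).sort (· ≤ ·)).map ⇑σ)

lemma image_card {n m : ℕ} (σ : Equiv.Perm (Fin (n + m))) (T : Col n m) :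
    (T.1.image ⇑σ).card = n := by
  rw [Finset.card_image_of_injective _ σ.injective, T.2]

/-- The (signed) action of `S_{n+m}` on the space of column tabloids:
`σ • v_T = sgn(sort₁) sgn(sort₂) v_{σ(T)}`, extended linearly. -/
noncomputable def act {n m : ℕ} (σ : Equiv.Perm (Fin (n + m))) (f : Mt n m) : Mt n m :=
  ∑ T : Col n m, f T •
    (actSign σ T • delta (⟨T.1.image ⇑σ, image_card σ T⟩ : Col n m))

section SpechtSide

variable (γ : Type*) [Fintype γ] [DecidableEq γ] (p q : ℕ)

/-- A bijective Young tableau of the two-column shape with column lengths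
`p` (first column) and `q` (second column), with entries in `γ`:
a bijection from the cells to the entries. -/
abbrev Tabl := (Fin p ⊕ Fin q) ≃ γ

/-- `rows` is a row tabloid of shape `(2^q, 1^{p-q})`: the first `q` rows are
unordered pairs, the remaining rows singletons, all pairwise disjoint
(together they then necessarily partition `γ`). -/
def IsRowTab (rows : Fin p → Finset γ) : Prop :=
  (∀ i, (rows i).card = if (i : ℕ) < q then 2 else 1) ∧
  ∀ i j, i ≠ j → Disjoint (rows i) (rows j)

/-- Row tabloids of shape `(2^q, 1^{p-q})`. -/
abbrev RowTab := {rows : Fin p → Finset γ // IsRowTab γ p q rows}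

/-- The permutation module `M^{(2^q,1^{p-q})}`, with basis the row tabloids. -/
abbrev MP := RowTab γ p q → ℂ

variable {γ p q}

/-- The rows of a tableau. -/
def rowsOf (t : Tabl γ p q) : Fin p → Finset γ := fun i =>
  if h : (i : ℕ) < q then {t (Sum.inl i), t (Sum.inr ⟨(i : ℕ), h⟩)}
  else {t (Sum.inl i)}

lemma mem_rowsOf {t : Tabl γ p q} {i : Fin p} {a : γ} (ha : a ∈ rowsOf t i) :
    a = t (Sum.inl i) ∨ ∃ h : (i : ℕ) < q, a = t (Sum.inr ⟨(i : ℕ), h⟩) := by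
  unfold rowsOf at ha
  split_ifs at ha with h
  · rcases Finset.mem_insert.mp ha with h1 | h1
    · exact Or.inl h1
    · exact Or.inr ⟨h, Finset.mem_singleton.mp h1⟩
  · exact Or.inl (Finset.mem_singleton.mp ha)

lemma isRowTab_rowsOf (t : Tabl γ p q) : IsRowTab γ p q (rowsOf t) := by
  constructor
  · intro i
    by_cases h : (i : ℕ) < q
    · rw [rowsOf, dif_pos h, if_pos h]
      exact Finset.card_pair (t.injective.ne (by simp))
    · rw [rowsOf, dif_neg h, if_neg h]
      exact Finset.card_singleton _
  · intro i j hij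
    rw [Finset.disjoint_left]
    intro a ha hb
    rcases mem_rowsOf ha with h1 | ⟨hi, h1⟩ <;> rcases mem_rowsOf hb with h2 | ⟨hj, h2⟩
    · exact hij (Sum.inl.inj (t.injective (h1.symm.trans h2)))
    · exact Sum.inl_ne_inr (t.injective (h1.symm.trans h2))
    · exact Sum.inr_ne_inl (t.injective (h1.symm.trans h2))
    · refine hij (Fin.ext ?_)
      have h3 := Sum.inr.inj (t.injective (h1.symm.trans h2))
      simpa using congrArg Fin.val h3

/-- The row tabloid `{t}` of a tableau `t`. -/
def rowTabOf (t : Tabl γ p q) : RowTab γ p q := ⟨rowsOf t, isRowTab_rowsOf t⟩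

/-- The column stabilizer `C_t` of a tableau: permutations preserving each
column setwise. -/
def colStab (t : Tabl γ p q) : Finset (Equiv.Perm γ) :=
  Finset.univ.filter fun σ =>
    (∀ i : Fin p, ∃ i' : Fin p, σ (t (Sum.inl i)) = t (Sum.inl i')) ∧
    (∀ j : Fin q, ∃ j' : Fin q, σ (t (Sum.inr j)) = t (Sum.inr j'))

/-- The polytabloid `ε_t = ∑_{β ∈ C_t} sgn(β) {β t}`. -/
noncomputable def polytab (t : Tabl γ p q) : MP γ p q :=
  ∑ σ ∈ colStab t, ((Equiv.Perm.sign σ : ℤ) : ℂ) • delta (rowTabOf (t.trans σ))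

variable (γ p q) in
/-- The Specht module `S^{(2^q,1^{p-q})}`: the span of all polytabloids. -/
noncomputable def SpechtMod : Submodule ℂ (MP γ p q) :=
  Submodule.span ℂ (Set.range (polytab (γ := γ) (p := p) (q := q)))

/-- The entrywise action of a permutation on a row tabloid. -/
def rowAct (σ : Equiv.Perm γ) (r : RowTab γ p q) : RowTab γ p q :=
  ⟨fun i => (r.1 i).image ⇑σ, by
    obtain ⟨h1, h2⟩ := r.2
    refine ⟨fun i => ?_, fun i j hij => ?_⟩
    · rw [Finset.card_image_of_injective _ σ.injective]; exact h1 i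
    · exact (Finset.disjoint_image σ.injective).mpr (h2 i j hij)⟩

/-- The entrywise `S_N`-action on the permutation module. -/
noncomputable def actP (σ : Equiv.Perm γ) (f : MP γ p q) : MP γ p q :=
  fun r => f (rowAct σ⁻¹ r)

end SpechtSide

/-- The tableau `t(T)` whose first column is `T` in increasing order and whose
second column is the complement of `T` in increasing order. -/
noncomputable def tabOf {n m : ℕ} (T : Col n m) : Tabl (Fin (n + m)) n m :=
  Equiv.ofBijective
    (Sum.elim (fun i => T.1.orderEmbOfFin T.2 i)
      (fun j => (T.1ᶜ).orderEmbOfFin (card_compl' T) j))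
    (by
      rw [Fintype.bijective_iff_injective_and_card]
      refine ⟨?_, by simp⟩
      rintro (i | i) (j | j) h <;> simp only [Sum.elim_inl, Sum.elim_inr] at h
      · exact congrArg Sum.inl ((T.1.orderEmbOfFin T.2).injective h)
      · have h1 := Finset.orderEmbOfFin_mem T.1 T.2 i
        have h2 := Finset.orderEmbOfFin_mem (T.1ᶜ) (card_compl' T) j
        rw [h] at h1
        simp only [Finset.mem_compl] at h2
        exact absurd h1 h2
      · have h1 := Finset.orderEmbOfFin_mem T.1 T.2 j
        have h2 := Finset.orderEmbOfFin_mem (T.1ᶜ) (card_compl' T) i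
        rw [← h] at h1
        simp only [Finset.mem_compl] at h2
        exact absurd h1 h2
      · exact congrArg Sum.inr (((T.1ᶜ).orderEmbOfFin (card_compl' T)).injective h))

/-- The `S_N`-equivariant map `α : M̃ → M^{(2^m,1^{n-m})}`, sending `v_T` to the
polytabloid `ε_{t(T)}` (its image is the Specht module). -/
noncomputable def alphaLin (n m : ℕ) : Mt n m →ₗ[ℂ] MP (Fin (n + m)) n m where
  toFun f := ∑ T : Col n m, f T • polytab (tabOf T)
  map_add' f g := by simp [add_smul, Finset.sum_add_distrib]
  map_smul' c f := by simp [Finset.smul_sum, smul_smul]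

/-- `φ(v_T)`, encoding the generalized Jacobi identity (for shape `(2^{n-1},1)`,
i.e. `n = m + 1`):
`φ(v_T) = v_T − ∑_{i=1}^n (−1)^{n−i} sgn(c_i) v_{Tᶜ ∪ {x_i}}` where
`x_i` is the `i`-th smallest element of `T` and `c_i` sorts `(y_1,…,y_{n−1},x_i)`. -/
noncomputable def phiBasis {n m : ℕ} (h : n = m + 1) (T : Col n m) : Mt n m :=
  delta T - ∑ i : Fin n,
    ((-1 : ℂ) ^ (n - 1 - (i : ℕ)) *
        invSign ((T.1ᶜ).sort (· ≤ ·) ++ [T.1.orderEmbOfFin T.2 i])) •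
      delta (⟨insert (T.1.orderEmbOfFin T.2 i) T.1ᶜ, by
        rw [Finset.card_insert_of_notMem (by
            simpa using Finset.orderEmbOfFin_mem T.1 T.2 i),
          card_compl']
        omega⟩ : Col n m)

/-- The map `φ : M̃ → M̃`, extended linearly; `ker φ ≅ ρ_{n,3}`. -/
noncomputable def phiFun {n m : ℕ} (h : n = m + 1) (f : Mt n m) : Mt n m :=
  ∑ T : Col n m, f T • phiBasis h T

/-- `φ` as a linear map. -/
noncomputable def phiLin (n m : ℕ) (h : n = m + 1) : Mt n m →ₗ[ℂ] Mt n m where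
  toFun := phiFun h
  map_add' f g := by simp [phiFun, add_smul, Finset.sum_add_distrib]
  map_smul' c f := by simp [phiFun, Finset.smul_sum, smul_smul]

/-!
Let `N = 2k + 3`, so that `n = k + 2`, and identify `M̃` with the functions on the
`(k+1)`-subsets `S` of `Fin N` through `g S = ε(S) f(Sᶜ)`, where `ε(S) = ∏_{x ∈ S} (-1)^x`.
The inversion signs in `φ` collapse to `(-1)^x`, and after this change of basis `φ` becomes,
up to a sign on each coordinate, `(-1)^(k+1) - K`, where `K g S = ∑_{T ∩ S = ∅} g T` is the
adjacency operator of the odd graph. So `ker φ` is the `(-1)^(k+1)`-eigenspace of `K`.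

This eigenspace is the kernel of the down operator `D` from `(k+1)`-subsets to `k`-subsets.
If `D g = 0`, Möbius inversion over the subsets of `S` leaves only the term `(-1)^(k+1) g S`
in `K g S`. Conversely `K² = D U = U D + 1` on `(k+1)`-subsets, so `K g = (-1)^(k+1) g` forces
`U D g = 0`, hence `‖D g‖² = ⟨U D g, g⟩ = 0`. Finally `D U = U D + (N - 2k)` is positive
definite on `k`-subsets, so `D` is onto and `dim ker D = C(N, k+1) - C(N, k) = C_{k+2}`.
-/

section Sorting

lemma sum_map_ite_eq_countP {α : Type*} (p : α → Prop) [DecidablePred p] (l : List α) :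
    (l.map fun x => if p x then 1 else 0).sum = l.countP p := by
  induction l <;> simp [List.countP_cons, *, add_comm]

variable {α : Type*} [LinearOrder α]

lemma invCount_cons (b : α) (l : List α) :
    invCount (b :: l) = l.countP (· < b) + invCount l := by
  simp only [invCount, Finset.card_filter, Fintype.sum_prod_type, Fin.sum_univ_succ,
    List.length_cons, List.get_eq_getElem, Fin.val_zero, Fin.val_succ, List.getElem_cons_zero,
    List.getElem_cons_succ, Fin.succ_pos, Fin.succ_lt_succ_iff, Fin.not_lt_zero, false_and,
    if_false, true_and, zero_add]
  exact congrArg (· + _) ((Fin.sum_univ_fun_getElem l _).trans (sum_map_ite_eq_countP (· < b) l))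

lemma invCount_append_singleton {l : List α} (hl : l.Pairwise (· < ·)) (a : α) :
    invCount (l ++ [a]) = l.countP (a < ·) := by
  induction l with
  | nil => rfl
  | cons b l ih =>
    rw [List.pairwise_cons] at hl
    rw [List.cons_append, invCount_cons, ih hl.2, List.countP_append, List.countP_cons,
      List.countP_eq_zero.2 fun x hx => by simpa using (hl.1 x hx).le]
    simp [List.countP_cons, add_comm]

lemma invSign_sort_append (s : Finset α) (a : α) :
    invSign (s.sort (· ≤ ·) ++ [a]) = (-1) ^ #{y ∈ s | a < y} := by
  rw [invSign, invCount_append_singleton (s.sortedLT_sort).pairwise, ← Multiset.coe_countP,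
    Finset.sort_eq, Finset.card_def, Finset.filter_val, Multiset.countP_eq_card_filter]

lemma card_filter_lt_orderEmbOfFin (s : Finset α) {n : ℕ} (h : s.card = n) (i : Fin n) :
    #{y ∈ s | s.orderEmbOfFin h i < y} = n - 1 - i := by
  rw [← Fin.card_Ioi, ← card_map (s.orderEmbOfFin h).toEmbedding]
  congr 1
  ext y
  simp only [mem_filter, mem_map, mem_Ioi, RelEmbedding.coe_toEmbedding]
  constructor
  · rintro ⟨hy, hlt⟩
    obtain ⟨a, rfl⟩ : y ∈ Set.range (s.orderEmbOfFin h) := by rwa [range_orderEmbOfFin]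
    exact ⟨a, (s.orderEmbOfFin h).lt_iff_lt.1 hlt, rfl⟩
  · rintro ⟨a, hia, rfl⟩
    exact ⟨orderEmbOfFin_mem s h a, (s.orderEmbOfFin h).lt_iff_lt.2 hia⟩

lemma sum_orderEmbOfFin {M : Type*} [AddCommMonoid M] (s : Finset α) {n : ℕ} (h : s.card = n)
    (g : α → M) : ∑ i, g (s.orderEmbOfFin h i) = ∑ x ∈ s, g x := by
  conv_rhs => rw [← map_orderEmbOfFin_univ s h, sum_map]
  rfl

end Sorting

abbrev KSubset (α : Type*) (k : ℕ) := {s : Finset α // s.card = k}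

namespace KSubset

variable {α : Type*} {j : ℕ}

def extend (f : KSubset α j → ℂ) (s : Finset α) : ℂ :=
  if h : s.card = j then f ⟨s, h⟩ else 0

lemma extend_of_card (f : KSubset α j → ℂ) {s : Finset α} (h : s.card = j) :
    extend f s = f ⟨s, h⟩ := dif_pos h

lemma extend_of_card_ne (f : KSubset α j → ℂ) {s : Finset α} (h : s.card ≠ j) :
    extend f s = 0 := dif_neg h

@[simp] lemma extend_val (f : KSubset α j → ℂ) (S : KSubset α j) : extend f S.1 = f S :=
  dif_pos S.2

variable [Fintype α] [DecidableEq α]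

lemma sum_ite_val_eq_extend (f : KSubset α j → ℂ) (s : Finset α) :
    ∑ T : KSubset α j, (if T.1 = s then f T else 0) = extend f s := by
  by_cases h : s.card = j
  · calc ∑ T : KSubset α j, (if T.1 = s then f T else 0)
        = ∑ T : KSubset α j, (if T = ⟨s, h⟩ then f T else 0) := by simp_rw [Subtype.ext_iff]
      _ = extend f s := by simp [extend_of_card f h]
  · rw [extend_of_card_ne f h]
    exact Finset.sum_eq_zero fun T _ => if_neg fun (hT : T.1 = s) => h (hT ▸ T.2)

lemma sum_subset_eq_sum_erase (f : KSubset α j → ℂ) {s : Finset α} (hs : s.card = j + 1) :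
    ∑ T : KSubset α j with T.1 ⊆ s, f T = ∑ x ∈ s, extend f (s.erase x) := by
  symm
  refine Finset.sum_bij (fun x hx => ⟨s.erase x, by rw [card_erase_of_mem hx, hs]; rfl⟩)
    (fun x _ => by simpa using erase_subset x s)
    (fun x hx y hy h => erase_injOn s hx hy (congrArg Subtype.val h)) ?_
    (fun x _ => extend_of_card f _)
  intro T hT
  rw [mem_filter] at hT
  obtain ⟨a, ha⟩ : (s \ T.1).Nonempty := by
    rw [← card_pos, card_sdiff_of_subset hT.2, hs, T.2]; omega
  rw [mem_sdiff] at ha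
  refine ⟨a, ha.1, Subtype.ext (eq_of_subset_of_card_le
    (fun y hy => mem_erase.2 ⟨ne_of_mem_of_not_mem hy ha.2, hT.2 hy⟩) ?_).symm⟩
  rw [card_erase_of_mem ha.1, hs, T.2]; rfl

lemma sum_superset_eq_sum_insert (f : KSubset α (j + 1) → ℂ) {s : Finset α}
    (hs : s.card = j) :
    ∑ T : KSubset α (j + 1) with s ⊆ T.1, f T = ∑ x ∈ sᶜ, extend f (insert x s) := by
  symm
  refine Finset.sum_bij
    (fun x hx => ⟨insert x s, by rw [card_insert_of_notMem (mem_compl.1 hx), hs]⟩)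
    (fun x _ => by simp)
    (fun x hx y _ h => (insert_inj (mem_compl.1 hx)).1 (congrArg Subtype.val h)) ?_
    (fun x _ => extend_of_card f _)
  intro T hT
  rw [mem_filter] at hT
  obtain ⟨a, ha⟩ : (T.1 \ s).Nonempty := by
    rw [← card_pos, card_sdiff_of_subset hT.2, hs, T.2]; omega
  rw [mem_sdiff] at ha
  refine ⟨a, mem_compl.2 ha.2, Subtype.ext (eq_of_subset_of_card_le
    (insert_subset ha.1 hT.2) ?_)⟩
  rw [card_insert_of_notMem ha.2, hs, T.2]

def incidence {i j : ℕ} (R : Finset α → Finset α → Prop) [DecidableRel R] :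
    (KSubset α i → ℂ) →ₗ[ℂ] (KSubset α j → ℂ) where
  toFun f S := ∑ T : KSubset α i with R S.1 T.1, f T
  map_add' f g := by ext S; simp [sum_add_distrib]
  map_smul' c f := by ext S; simp [mul_sum]

variable (α) in
def up (j : ℕ) : (KSubset α j → ℂ) →ₗ[ℂ] (KSubset α (j + 1) → ℂ) :=
  incidence fun S T => T ⊆ S

variable (α) in
def down (j : ℕ) : (KSubset α (j + 1) → ℂ) →ₗ[ℂ] (KSubset α j → ℂ) :=
  incidence fun S T => S ⊆ T

variable (α) in
def kneser (j : ℕ) : Module.End ℂ (KSubset α j → ℂ) :=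
  incidence Disjoint

lemma up_apply (f : KSubset α j → ℂ) (S : KSubset α (j + 1)) :
    up α j f S = ∑ T : KSubset α j with T.1 ⊆ S.1, f T := rfl

lemma down_apply (f : KSubset α (j + 1) → ℂ) (S : KSubset α j) :
    down α j f S = ∑ T : KSubset α (j + 1) with S.1 ⊆ T.1, f T := rfl

lemma kneser_apply (f : KSubset α j → ℂ) (S : KSubset α j) :
    kneser α j f S = ∑ T : KSubset α j with Disjoint S.1 T.1, f T := rfl

lemma extend_up (f : KSubset α j → ℂ) {s : Finset α} (hs : s.card = j + 1) :
    extend (up α j f) s = ∑ x ∈ s, extend f (s.erase x) := by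
  rw [extend_of_card _ hs, up_apply, sum_subset_eq_sum_erase f hs]

lemma extend_down (f : KSubset α (j + 1) → ℂ) {s : Finset α} (hs : s.card = j) :
    extend (down α j f) s = ∑ x ∈ sᶜ, extend f (insert x s) := by
  rw [extend_of_card _ hs, down_apply, sum_superset_eq_sum_insert f hs]

lemma up_dotProduct_star (g : KSubset α j → ℂ) (f : KSubset α (j + 1) → ℂ) :
    up α j g ⬝ᵥ star f = g ⬝ᵥ star (down α j f) := by
  simp only [dotProduct, up_apply, down_apply, Pi.star_apply, star_sum, sum_filter, sum_mul,
    mul_sum, ite_mul, mul_ite, zero_mul, mul_zero, apply_ite star, star_zero]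
  exact sum_comm

lemma down_up_apply (f : KSubset α j → ℂ) (S : KSubset α j) :
    down α j (up α j f) S = ((Fintype.card α - j : ℕ) : ℂ) * f S
      + ∑ x ∈ S.1ᶜ, ∑ y ∈ S.1, extend f (insert x (S.1.erase y)) := by
  have h : ∀ x ∈ S.1ᶜ, extend (up α j f) (insert x S.1)
      = f S + ∑ y ∈ S.1, extend f (insert x (S.1.erase y)) := by
    intro x hx
    have hxS := mem_compl.1 hx
    rw [extend_up f (by rw [card_insert_of_notMem hxS, S.2]), sum_insert hxS, erase_insert hxS,
      extend_val]
    refine congrArg _ (sum_congr rfl fun y hy => ?_)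
    rw [erase_insert_of_ne (ne_of_mem_of_not_mem hy hxS).symm]
  rw [← extend_val (down α j _), extend_down _ S.2, sum_congr rfl h, sum_add_distrib, sum_const,
    card_compl, S.2, nsmul_eq_mul]

lemma up_down_apply (f : KSubset α (j + 1) → ℂ) (S : KSubset α (j + 1)) :
    up α j (down α j f) S = ((j + 1 : ℕ) : ℂ) * f S
      + ∑ x ∈ S.1ᶜ, ∑ y ∈ S.1, extend f (insert x (S.1.erase y)) := by
  have h : ∀ y ∈ S.1, extend (down α j f) (S.1.erase y)
      = f S + ∑ x ∈ S.1ᶜ, extend f (insert x (S.1.erase y)) := by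
    intro y hy
    rw [extend_down f (by rw [card_erase_of_mem hy, S.2]; rfl), compl_erase,
      sum_insert (by simp [hy]), insert_erase hy, extend_val]
  rw [← extend_val (up α j _), extend_up _ S.2, sum_congr rfl h, sum_add_distrib, sum_const,
    S.2, nsmul_eq_mul, sum_comm]

lemma down_up_add_smul (f : KSubset α (j + 1) → ℂ) :
    down α (j + 1) (up α (j + 1) f) + ((j + 1 : ℕ) : ℂ) • f
      = up α j (down α j f) + ((Fintype.card α - (j + 1) : ℕ) : ℂ) • f := by
  ext S
  simp only [Pi.add_apply, Pi.smul_apply, smul_eq_mul, down_up_apply, up_down_apply]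
  ring

open scoped ComplexOrder in
lemma down_comp_up_injective (h : 2 * j < Fintype.card α) :
    Function.Injective (down α j ∘ₗ up α j) := by
  rw [← LinearMap.ker_eq_bot, LinearMap.ker_eq_bot']
  intro f hf
  cases j with
  | zero =>
    ext S
    have hS : S.1 = ∅ := card_eq_zero.1 S.2
    have := congrFun hf S
    rw [LinearMap.comp_apply, down_up_apply, hS] at this
    simp only [sum_empty, sum_const_zero, add_zero, Pi.zero_apply] at this
    exact (mul_eq_zero.1 this).resolve_left (by simpa using h.ne')
  | succ i =>
    have hcomm := down_up_add_smul f
    rw [show down α (i + 1) (up α (i + 1) f) = 0 from hf, zero_add] at hcomm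
    have hdot := congrArg (· ⬝ᵥ star f) hcomm
    simp only [add_dotProduct, smul_dotProduct, up_dotProduct_star, smul_eq_mul] at hdot
    obtain ⟨c, hc⟩ : ∃ c, Fintype.card α - (i + 1) = (i + 1) + (c + 1) :=
      ⟨Fintype.card α - 2 * (i + 1) - 1, by omega⟩
    have key : down α i f ⬝ᵥ star (down α i f) + ((c + 1 : ℕ) : ℂ) * (f ⬝ᵥ star f) = 0 := by
      rw [hc] at hdot
      push_cast at hdot ⊢
      linear_combination -hdot
    have hff := ((add_eq_zero_iff_of_nonneg (dotProduct_self_star_nonneg _)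
      (mul_nonneg (Nat.cast_nonneg _) (dotProduct_self_star_nonneg f))).1 key).2
    exact dotProduct_self_star_eq_zero.1
      ((mul_eq_zero.1 hff).resolve_left (Nat.cast_ne_zero.2 c.succ_ne_zero))

lemma down_surjective (h : 2 * j < Fintype.card α) : Function.Surjective (down α j) := fun g =>
  let ⟨f, hf⟩ := LinearMap.injective_iff_surjective.1 (down_comp_up_injective h) g
  ⟨up α j f, hf⟩

lemma finrank_ker_down (h : 2 * j < Fintype.card α) :
    Module.finrank ℂ (LinearMap.ker (down α j)) + (Fintype.card α).choose j
      = (Fintype.card α).choose (j + 1) := by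
  have := LinearMap.finrank_range_add_finrank_ker (down α j)
  rw [LinearMap.range_eq_top.2 (down_surjective h), finrank_top] at this
  simp only [Module.finrank_fintype_fun_eq_card, Fintype.card_finset_len] at this
  omega

variable (α) in
def complEquiv {i j : ℕ} (h : Fintype.card α = i + j) : KSubset α i ≃ KSubset α j where
  toFun S := ⟨S.1ᶜ, by rw [card_compl, S.2]; omega⟩
  invFun T := ⟨T.1ᶜ, by rw [card_compl, T.2]; omega⟩
  left_inv S := by simp
  right_inv T := by simp

@[simp] lemma complEquiv_val {i j : ℕ} (h : Fintype.card α = i + j) (S : KSubset α i) :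
    (complEquiv α h S).1 = S.1ᶜ := rfl

lemma kneser_apply_eq_up_compl (h : Fintype.card α = j + (j + 1)) (f : KSubset α j → ℂ)
    (S : KSubset α j) : kneser α j f S = up α j f (complEquiv α h S) := by
  simp only [kneser_apply, up_apply, complEquiv_val, subset_compl_iff_disjoint_left]

lemma kneser_kneser_eq_down_up (h : Fintype.card α = j + (j + 1)) (f : KSubset α j → ℂ) :
    kneser α j (kneser α j f) = down α j (up α j f) := by
  ext S
  rw [kneser_apply, down_apply]
  simp only [kneser_apply_eq_up_compl h, sum_filter]
  exact Fintype.sum_equiv (complEquiv α h) _ _ fun T => by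
    simp [subset_compl_iff_disjoint_right]

lemma sum_superset_self (f : KSubset α j → ℂ) (S : KSubset α j) :
    ∑ T : KSubset α j with S.1 ⊆ T.1, f T = f S := by
  rw [sum_filter, Fintype.sum_eq_single S fun T hT => if_neg fun hST =>
    hT (Subtype.ext (eq_of_subset_of_card_le hST (by rw [T.2, S.2])).symm), if_pos subset_rfl]

lemma sum_subset_boole_superset {B : Finset α} {T : KSubset α (j + 1)} (hBT : B ⊆ T.1) :
    ∑ C : KSubset α j with C.1 ⊆ T.1, (if B ⊆ C.1 then 1 else 0 : ℂ)
      = ((j + 1 - B.card : ℕ) : ℂ) := by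
  calc ∑ C : KSubset α j with C.1 ⊆ T.1, (if B ⊆ C.1 then 1 else 0 : ℂ)
      = ∑ x ∈ T.1, (if x ∉ B then 1 else 0 : ℂ) := by
        rw [sum_subset_eq_sum_erase _ T.2]
        refine sum_congr rfl fun x hx => ?_
        rw [extend_of_card _ (by rw [card_erase_of_mem hx, T.2]; rfl)]
        simp [subset_erase, hBT]
    _ = ((j + 1 - B.card : ℕ) : ℂ) := by
        rw [sum_boole, ← sdiff_eq_filter, card_sdiff_of_subset hBT, T.2]

lemma sum_superset_eq_zero_of_down_eq_zero {f : KSubset α (j + 1) → ℂ} (hf : down α j f = 0)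
    {B : Finset α} (hB : B.card ≤ j) : ∑ T : KSubset α (j + 1) with B ⊆ T.1, f T = 0 := by
  have hdouble : ∑ C : KSubset α j with B ⊆ C.1, down α j f C
      = ((j + 1 - B.card : ℕ) : ℂ) * ∑ T : KSubset α (j + 1) with B ⊆ T.1, f T := by
    calc ∑ C : KSubset α j with B ⊆ C.1, down α j f C
        = ∑ T : KSubset α (j + 1), f T *
            ∑ C : KSubset α j with C.1 ⊆ T.1, (if B ⊆ C.1 then 1 else 0 : ℂ) := by
          simp only [down_apply, sum_filter, mul_sum, mul_ite, mul_one, mul_zero]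
          rw [sum_comm]
          refine sum_congr rfl fun C _ => ?_
          split_ifs <;> simp
      _ = ∑ T : KSubset α (j + 1) with B ⊆ T.1, f T * ((j + 1 - B.card : ℕ) : ℂ) := by
          rw [sum_filter]
          refine sum_congr rfl fun T _ => ?_
          split_ifs with hBT
          · rw [sum_subset_boole_superset hBT]
          · rw [sum_eq_zero fun C hC => if_neg fun hBC => hBT (hBC.trans (mem_filter.1 hC).2),
              mul_zero]
      _ = _ := by rw [← sum_mul, mul_comm]
  have hne : ((j + 1 - B.card : ℕ) : ℂ) ≠ 0 := Nat.cast_ne_zero.2 (by omega)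
  simpa [hf, hne] using hdouble.symm

lemma kneser_eq_neg_one_pow_smul_of_down_eq_zero {f : KSubset α (j + 1) → ℂ}
    (hf : down α j f = 0) : kneser α (j + 1) f = (-1 : ℂ) ^ (j + 1) • f := by
  ext S
  rw [Pi.smul_apply, smul_eq_mul]
  have hmobius : ∀ T : KSubset α (j + 1),
      ∑ B ∈ S.1.powerset with B ⊆ T.1, (-1 : ℂ) ^ B.card = if Disjoint S.1 T.1 then 1 else 0 := by
    intro T
    have := congrArg (Int.cast : ℤ → ℂ) (sum_powerset_neg_one_pow_card (x := S.1 ∩ T.1))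
    rw [show S.1.powerset.filter (· ⊆ T.1) = (S.1 ∩ T.1).powerset by
      ext; simp only [mem_filter, mem_powerset, subset_inter_iff]]
    simpa [disjoint_iff_inter_eq_empty] using this
  calc kneser α (j + 1) f S
      = ∑ T : KSubset α (j + 1), f T * ∑ B ∈ S.1.powerset with B ⊆ T.1, (-1 : ℂ) ^ B.card := by
        simp [kneser_apply, hmobius, sum_filter]
    _ = ∑ B ∈ S.1.powerset, (-1 : ℂ) ^ B.card * ∑ T : KSubset α (j + 1) with B ⊆ T.1, f T := by
        simp only [sum_filter, mul_sum, mul_ite, mul_zero]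
        rw [sum_comm]
        simp only [mul_comm]
    _ = (-1) ^ (j + 1) * f S := by
        refine (sum_eq_single_of_mem S.1 (mem_powerset_self _) fun B hB hne => ?_).trans
          (by rw [sum_superset_self, S.2])
        have hBS : B.card < j + 1 :=
          S.2 ▸ card_lt_card (ssubset_of_subset_of_ne (mem_powerset.1 hB) hne)
        rw [sum_superset_eq_zero_of_down_eq_zero hf (Nat.lt_succ_iff.1 hBS), mul_zero]

open scoped ComplexOrder in
lemma eigenspace_kneser_eq_ker_down (h : Fintype.card α = (j + 1) + (j + 2)) :
    Module.End.eigenspace (kneser α (j + 1)) ((-1 : ℂ) ^ (j + 1)) = LinearMap.ker (down α j) := by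
  ext f
  rw [Module.End.mem_eigenspace_iff, LinearMap.mem_ker]
  refine ⟨fun hK => ?_, kneser_eq_neg_one_pow_smul_of_down_eq_zero⟩
  have hDU : down α (j + 1) (up α (j + 1) f) = f := by
    rw [← kneser_kneser_eq_down_up h, hK, map_smul, hK, smul_smul, ← pow_add, ← two_mul, pow_mul, neg_one_sq,
      one_pow, one_smul]
  have hUD : up α j (down α j f) = 0 := by
    have := down_up_add_smul f
    rw [hDU, show Fintype.card α - (j + 1) = (j + 1) + 1 by omega] at this
    push_cast at this
    linear_combination (norm := module) -this
  rw [← dotProduct_self_star_eq_zero, ← up_dotProduct_star, hUD, zero_dotProduct]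

end KSubset

lemma catalan_add_choose (k : ℕ) :
    catalan (k + 2) + (2 * k + 3).choose k = (2 * k + 3).choose (k + 1) := by
  have hcat : (k + 3) * catalan (k + 2) = 2 * (2 * k + 3).choose (k + 1) := by
    rw [succ_mul_catalan_eq_centralBinom, Nat.centralBinom_eq_two_mul_choose,
      show 2 * (k + 2) = (2 * k + 3) + 1 by ring, Nat.choose_succ_succ',
      show 2 * k + 3 = 2 * (k + 1) + 1 by ring, Nat.choose_symm_half]
    ring
  have hstep : (2 * k + 3).choose (k + 1) * (k + 1) = (2 * k + 3).choose k * (k + 3) := by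
    rw [Nat.choose_succ_right_eq, show 2 * k + 3 - k = k + 3 by omega]
  refine Nat.eq_of_mul_eq_mul_left (show 0 < k + 3 by omega) ?_
  linarith

lemma mem_and_eq_insert_compl_iff {α : Type*} [Fintype α] [DecidableEq α] {x : α}
    {t u : Finset α} : x ∈ t ∧ u = insert x tᶜ ↔ x ∈ u ∧ t = (u.erase x)ᶜ := by
  constructor
  · rintro ⟨hx, rfl⟩
    exact ⟨mem_insert_self _ _, by rw [erase_insert (notMem_compl.2 hx), compl_compl]⟩
  · rintro ⟨hx, rfl⟩
    exact ⟨by simp, by rw [compl_compl, insert_erase hx]⟩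

section Phi

variable {n m : ℕ}

lemma phiBasis_coeff (h : n = m + 1) (T : Col n m) (i : Fin n) :
    (-1 : ℂ) ^ (n - 1 - (i : ℕ)) * invSign ((T.1ᶜ).sort (· ≤ ·) ++ [T.1.orderEmbOfFin T.2 i])
      = (-1) ^ (T.1.orderEmbOfFin T.2 i : ℕ) := by
  set x := T.1.orderEmbOfFin T.2 i
  have hsplit : #{y ∈ T.1 | x < y} + #{y ∈ T.1ᶜ | x < y} = n + m - 1 - x := by
    rw [← card_union_of_disjoint (disjoint_filter_filter disjoint_compl_right), ← filter_union,
      union_compl, ← Fin.card_Ioi]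
    congr 1
    ext
    simp
  rw [invSign_sort_append, ← pow_add, ← card_filter_lt_orderEmbOfFin T.1 T.2 i, hsplit,
    neg_one_pow_eq_pow_mod_two, neg_one_pow_eq_pow_mod_two (n := (x : ℕ))]
  have hx : (x : ℕ) < n + m := x.2
  congr 1
  omega

lemma phiBasis_apply (h : n = m + 1) (T U : Col n m) :
    phiBasis h T U = (if U = T then 1 else 0)
      - ∑ x ∈ T.1, if U.1 = insert x T.1ᶜ then (-1 : ℂ) ^ (x : ℕ) else 0 := by
  rw [phiBasis, Pi.sub_apply, Finset.sum_apply, delta, ← sum_orderEmbOfFin T.1 T.2]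
  congr 1
  · split_ifs <;> rfl
  · refine sum_congr rfl fun i _ => ?_
    rw [Pi.smul_apply, phiBasis_coeff h, delta, smul_eq_mul, Subtype.ext_iff]
    split_ifs <;> simp

lemma phiLin_apply (h : n = m + 1) (f : Mt n m) (U : Col n m) :
    phiLin n m h f U
      = f U - ∑ x ∈ U.1, (-1 : ℂ) ^ (x : ℕ) * KSubset.extend f (U.1.erase x)ᶜ := by
  change (∑ T, f T • phiBasis h T) U = _
  simp only [Finset.sum_apply, Pi.smul_apply, smul_eq_mul, phiBasis_apply, mul_sub,
    sum_sub_distrib, mul_ite, mul_one, mul_zero, sum_ite_eq, mem_univ, if_true, mul_sum]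
  congr 1
  rw [sum_comm' (t' := univ) (s' := fun x => univ.filter fun T : Col n m => x ∈ T.1) (by simp)]
  conv_rhs => rw [← sum_ite_mem_eq]
  refine sum_congr rfl fun x _ => ?_
  simp_rw [sum_filter, ← ite_and, mem_and_eq_insert_compl_iff, ite_and]
  split_ifs with hx
  · simp_rw [mul_comm (f _), ← mul_ite_zero, ← mul_sum, KSubset.sum_ite_val_eq_extend]
  · simp

end Phi

section AltSign

variable {N : ℕ}

noncomputable def altSign (s : Finset (Fin N)) : ℂ := ∏ x ∈ s, (-1) ^ (x : ℕ)

lemma altSign_mul_self (s : Finset (Fin N)) : altSign s * altSign s = 1 := by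
  rw [altSign, ← prod_mul_distrib]
  exact prod_eq_one fun x _ => by rw [← pow_add, ← two_mul, pow_mul, neg_one_sq, one_pow]

lemma altSign_ne_zero (s : Finset (Fin N)) : altSign s ≠ 0 :=
  left_ne_zero_of_mul_eq_one (altSign_mul_self s)

lemma altSign_eq_mul_erase {s : Finset (Fin N)} {x : Fin N} (hx : x ∈ s) :
    altSign s = (-1) ^ (x : ℕ) * altSign (s.erase x) :=
  (mul_prod_erase s _ hx).symm

lemma altSign_mul_altSign_compl {j : ℕ} (hN : N = 2 * j + 1) (s : Finset (Fin N)) :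
    altSign s * altSign sᶜ = (-1) ^ j := by
  rw [altSign, altSign, prod_mul_prod_compl, prod_pow_eq_pow_sum,
    Fin.sum_univ_eq_sum_range (fun i => i), sum_range_id, hN,
    show (2 * j + 1) * (2 * j + 1 - 1) / 2 = j + 2 * (j * j) by
      rw [Nat.add_sub_cancel, Nat.div_eq_of_eq_mul_left two_pos]; ring,
    pow_add, pow_mul, neg_one_sq, one_pow, mul_one]

end AltSign

section SignedComplement

lemma card_fin_eq (k : ℕ) : Fintype.card (Fin (k + 2 + (k + 1))) = (k + 1) + (k + 2) := by
  simp only [Fintype.card_fin]; omega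

noncomputable def signedCompl (k : ℕ) :
    Mt (k + 2) (k + 1) ≃ₗ[ℂ] (KSubset (Fin (k + 2 + (k + 1))) (k + 1) → ℂ) :=
  (LinearEquiv.funCongrLeft ℂ ℂ (KSubset.complEquiv _ (card_fin_eq k))).trans
    (LinearEquiv.ofInvolutive (LinearMap.mulLeft ℂ fun S => altSign S.1) fun g => by
      ext S; simp [← mul_assoc, altSign_mul_self])

variable {k : ℕ}

lemma signedCompl_apply (f : Mt (k + 2) (k + 1)) (S : KSubset (Fin (k + 2 + (k + 1))) (k + 1)) :
    signedCompl k f S = altSign S.1 * f (KSubset.complEquiv _ (card_fin_eq k) S) := rfl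

lemma extend_compl_eq (f : Mt (k + 2) (k + 1)) (s : Finset (Fin (k + 2 + (k + 1)))) :
    KSubset.extend f sᶜ = altSign s * KSubset.extend (signedCompl k f) s := by
  by_cases hs : s.card = k + 1
  · rw [KSubset.extend_of_card _ hs, signedCompl_apply, ← mul_assoc, altSign_mul_self, one_mul,
      KSubset.extend_of_card]
    rfl
  · have hsc : sᶜ.card ≠ k + 2 := by rw [card_compl, Fintype.card_fin]; omega
    rw [KSubset.extend_of_card_ne _ hs, KSubset.extend_of_card_ne _ hsc, mul_zero]

lemma altSign_compl_mul_phiLin_apply (f : Mt (k + 2) (k + 1))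
    (S : KSubset (Fin (k + 2 + (k + 1))) (k + 1)) :
    altSign S.1ᶜ * phiLin (k + 2) (k + 1) rfl f (KSubset.complEquiv _ (card_fin_eq k) S)
      = (-1) ^ (k + 1) * signedCompl k f S
        - KSubset.kneser _ (k + 1) (signedCompl k f) S := by
  set U := KSubset.complEquiv _ (card_fin_eq k) S
  have hfU : f U = altSign S.1 * signedCompl k f S := by
    rw [signedCompl_apply, ← mul_assoc, altSign_mul_self, one_mul]
  have hsum : ∑ x ∈ U.1, (-1 : ℂ) ^ (x : ℕ) * KSubset.extend f (U.1.erase x)ᶜ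
      = altSign U.1 * KSubset.up _ (k + 1) (signedCompl k f) U := by
    rw [← KSubset.extend_val (KSubset.up _ (k + 1) (signedCompl k f)) U, KSubset.extend_up _ U.2,
      mul_sum]
    refine sum_congr rfl fun x hx => ?_
    rw [extend_compl_eq, altSign_eq_mul_erase hx, mul_assoc]
  rw [phiLin_apply, hfU, hsum, KSubset.kneser_apply_eq_up_compl (card_fin_eq k),
    mul_sub, ← mul_assoc, ← mul_assoc, mul_comm (altSign _) (altSign S.1),
    altSign_mul_altSign_compl (j := k + 1) (by omega), KSubset.complEquiv_val, altSign_mul_self,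
    one_mul]

lemma ker_phiLin_eq_comap :
    LinearMap.ker (phiLin (k + 2) (k + 1) rfl) = (Module.End.eigenspace
      (KSubset.kneser _ (k + 1)) ((-1 : ℂ) ^ (k + 1))).comap (signedCompl k).toLinearMap := by
  ext f
  simp only [LinearMap.mem_ker, Submodule.mem_comap, Module.End.mem_eigenspace_iff, funext_iff,
    Pi.zero_apply, Pi.smul_apply, smul_eq_mul, LinearEquiv.coe_coe]
  rw [← (KSubset.complEquiv _ (card_fin_eq k)).forall_congr_right]
  refine forall_congr' fun S => ?_
  rw [← mul_right_inj' (altSign_ne_zero S.1ᶜ), mul_zero, altSign_compl_mul_phiLin_apply,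
    sub_eq_zero, eq_comm]

end SignedComplement

/-- With `m = n - 1`, the dimension of `ker φ` (which realizes
`ρ_{n,3}`) equals the `n`-th Catalan number `C_n = (1/(n+1))·binom(2n, n)`. -/
theorem dim_ker_phi_eq_catalan (n : ℕ) (hn : 2 ≤ n) :
    Module.finrank ℂ (LinearMap.ker (phiLin n (n - 1) (by omega))) = catalan n ∧
    (n + 1) * catalan n = (2 * n).choose n := by
  obtain ⟨k, rfl⟩ : ∃ k, n = k + 2 := ⟨n - 2, by omega⟩
  refine ⟨?_, by rw [succ_mul_catalan_eq_centralBinom, Nat.centralBinom_eq_two_mul_choose]⟩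
  have hker := KSubset.finrank_ker_down (α := Fin (k + 2 + (k + 1))) (j := k)
    (by rw [card_fin_eq]; omega)
  rw [card_fin_eq, show k + 1 + (k + 2) = 2 * k + 3 by omega, ← catalan_add_choose] at hker
  change Module.finrank ℂ (LinearMap.ker (phiLin (k + 2) (k + 1) rfl)) = _
  rw [ker_phiLin_eq_comap, Submodule.comap_equiv_eq_map_symm, LinearEquiv.finrank_map_eq,
    KSubset.eigenspace_kneser_eq_ker_down (card_fin_eq k)]
  omega
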